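/- Let k ≥ 4 and let a_{ij} (i+j = k, i,j ≥ 0) be real numbers. Consider the polynomial P(x,y) = x^2 y + Σ_{i+j=k} (a_{ij}/(i!j!)) x^i y^j in ℝ[x,y], and set u(x,y) = (1/2) Σ_{i+j=k, i≥1, j≥1} (a_{ij}/(i!j!)) x^{i-1} y^{j-1} and v(x) = (a_{k0}/k!) x^{k-2}. Then every monomial occurring in the polynomial P(x − u(x,y), y − v(x)) − (x^2 y + (a_{0k}/k!) y^k) has total degree at least k+1; that is, the k-jet at the origin of P after the coordinate change (x,y) ↦ (x − u(x,y), y − v(x)) equals x^2 y + (a_{0k}/k!) y^k. -/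

import Mathlib

open MvPolynomial

/-- The polynomial `P(x,y) = x²y + Σ_{i+j=k} (a_{ij}/(i!j!)) xⁱ yʲ`. -/
noncomputable def Pdef1 (k : ℕ) (a : ℕ → ℕ → ℝ) : MvPolynomial (Fin 2) ℝ :=
  X 0 ^ 2 * X 1 + ∑ i ∈ Finset.range (k + 1),
    C (a i (k - i) / ((Nat.factorial i : ℝ) * (Nat.factorial (k - i) : ℝ))) *
      X 0 ^ i * X 1 ^ (k - i)

/-- The polynomial `u(x,y) = (1/2) Σ_{i+j=k, i≥1, j≥1} (a_{ij}/(i!j!)) x^{i-1} y^{j-1}`. -/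
noncomputable def udef1 (k : ℕ) (a : ℕ → ℕ → ℝ) : MvPolynomial (Fin 2) ℝ :=
  C (1 / 2 : ℝ) * ∑ i ∈ Finset.Ico 1 k,
    C (a i (k - i) / ((Nat.factorial i : ℝ) * (Nat.factorial (k - i) : ℝ))) *
      X 0 ^ (i - 1) * X 1 ^ (k - i - 1)

/-- The polynomial `v(x) = (a_{k0}/k!) x^{k-2}`. -/
noncomputable def vdef1 (k : ℕ) (a : ℕ → ℕ → ℝ) : MvPolynomial (Fin 2) ℝ :=
  C (a k 0 / (Nat.factorial k : ℝ)) * X 0 ^ (k - 2)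

/-- Coefficient abbreviation. -/
noncomputable def cf1 (k : ℕ) (a : ℕ → ℕ → ℝ) (i : ℕ) : ℝ :=
  a i (k - i) / ((Nat.factorial i : ℝ) * (Nat.factorial (k - i) : ℝ))

lemma Pdef1_eq (k : ℕ) (a : ℕ → ℕ → ℝ) :
    Pdef1 k a = X 0 ^ 2 * X 1 + ∑ i ∈ Finset.range (k + 1),
      C (cf1 k a i) * X 0 ^ i * X 1 ^ (k - i) := rfl

lemma udef1_eq (k : ℕ) (a : ℕ → ℕ → ℝ) :
    udef1 k a = C (1 / 2 : ℝ) * ∑ i ∈ Finset.Ico 1 k,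
      C (cf1 k a i) * X 0 ^ (i - 1) * X 1 ^ (k - i - 1) := rfl

lemma vdef1_eq (k : ℕ) (a : ℕ → ℕ → ℝ) :
    vdef1 k a = C (cf1 k a k) * X 0 ^ (k - 2) := by
  rw [vdef1, cf1]
  simp [Nat.sub_self]

lemma cf1_zero (k : ℕ) (a : ℕ → ℕ → ℝ) :
    cf1 k a 0 = a 0 k / (Nat.factorial k : ℝ) := by
  simp [cf1]

/-- All monomials of `p` have total degree at least `n`. -/
def LB (n : ℕ) (p : MvPolynomial (Fin 2) ℝ) : Prop :=
  ∀ m ∈ p.support, n ≤ m.sum fun _ e => e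

lemma LB_zero (n : ℕ) : LB n 0 := by intro m hm; simp at hm

lemma LB_mono {m n : ℕ} (h : m ≤ n) {p : MvPolynomial (Fin 2) ℝ} (hp : LB n p) : LB m p :=
  fun d hd => le_trans h (hp d hd)

lemma LB_add {n : ℕ} {p q : MvPolynomial (Fin 2) ℝ} (hp : LB n p) (hq : LB n q) :
    LB n (p + q) := by
  intro m hm
  rcases Finset.mem_union.1 (MvPolynomial.support_add hm) with h | h
  · exact hp m h
  · exact hq m h

lemma LB_neg {n : ℕ} {p : MvPolynomial (Fin 2) ℝ} (hp : LB n p) : LB n (-p) := by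
  intro m hm
  rw [MvPolynomial.support_neg] at hm
  exact hp m hm

lemma LB_sub {n : ℕ} {p q : MvPolynomial (Fin 2) ℝ} (hp : LB n p) (hq : LB n q) :
    LB n (p - q) := by
  rw [sub_eq_add_neg]; exact LB_add hp (LB_neg hq)

lemma LB_mul {n m : ℕ} {p q : MvPolynomial (Fin 2) ℝ} (hp : LB n p) (hq : LB m q) :
    LB (n + m) (p * q) := by
  intro d hd
  obtain ⟨a, ha, b, hb, rfl⟩ := Finset.mem_add.1 (MvPolynomial.support_mul p q hd)
  rw [Finsupp.sum_add_index' (fun _ => rfl) (fun _ _ _ => rfl)]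
  exact add_le_add (hp a ha) (hq b hb)

lemma LB_C (c : ℝ) : LB 0 (C c : MvPolynomial (Fin 2) ℝ) := fun _ _ => Nat.zero_le _

lemma LB_X (i : Fin 2) : LB 1 (X i : MvPolynomial (Fin 2) ℝ) := by
  intro m hm
  rw [MvPolynomial.support_X, Finset.mem_singleton] at hm
  subst hm
  simp [Finsupp.sum_single_index]

lemma LB_pow {n : ℕ} {p : MvPolynomial (Fin 2) ℝ} (hp : LB n p) (i : ℕ) :
    LB (n * i) (p ^ i) := by
  induction i with
  | zero => intro m hm; simp
  | succ i ih =>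
      rw [pow_succ, Nat.mul_succ]
      exact LB_mul ih hp

lemma LB_X_pow (i : Fin 2) (e : ℕ) : LB e ((X i : MvPolynomial (Fin 2) ℝ) ^ e) := by
  simpa using LB_pow (LB_X i) e

lemma LB_sum {n : ℕ} {s : Finset ℕ} {f : ℕ → MvPolynomial (Fin 2) ℝ}
    (h : ∀ i ∈ s, LB n (f i)) : LB n (∑ i ∈ s, f i) := by
  classical
  induction s using Finset.induction with
  | empty => simpa using LB_zero n
  | insert x s hx ih =>
      rw [Finset.sum_insert hx]
      exact LB_add (h _ (Finset.mem_insert_self _ _))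
        (ih fun i hi => h i (Finset.mem_insert_of_mem hi))

lemma LB_diff_pow {q r : MvPolynomial (Fin 2) ℝ} {d : ℕ} (hq : LB 1 q) (hr : LB d r)
    (hd : 1 ≤ d) : ∀ i, LB (d - 1 + i) ((q - r) ^ i - q ^ i) := by
  intro i
  induction i with
  | zero => simpa using LB_zero _
  | succ i ih =>
      have key : (q - r) ^ (i + 1) - q ^ (i + 1)
          = (q - r) * ((q - r) ^ i - q ^ i) - r * q ^ i := by ring
      rw [key]
      have h1 : LB (1 + (d - 1 + i)) ((q - r) * ((q - r) ^ i - q ^ i)) :=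
        LB_mul (LB_sub hq (LB_mono hd hr)) ih
      have h2 : LB (d + 1 * i) (r * q ^ i) := LB_mul hr (LB_pow hq i)
      have e1 : d - 1 + (i + 1) = 1 + (d - 1 + i) := by omega
      have e2 : d - 1 + (i + 1) = d + 1 * i := by omega
      exact LB_sub (e1 ▸ h1) (e2 ▸ h2)

/-- Part (2) of the coordinate-change lemma (Proposition 3.1):
every monomial of `P(x - u(x,y), y - v(x)) - (x²y + (a_{0k}/k!) yᵏ)` has total degree at
least `k + 1`; that is, the `k`-jet at the origin of `P` after the coordinate change
`(x,y) ↦ (x - u(x,y), y - v(x))` equals `x²y + (a_{0k}/k!) yᵏ`. -/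
theorem stmt1 (k : ℕ) (hk : 4 ≤ k) (a : ℕ → ℕ → ℝ) :
    ∀ m ∈ (bind₁ (fun j : Fin 2 => if j = 0 then X 0 - udef1 k a
          else X 1 - vdef1 k a) (Pdef1 k a)
        - (X 0 ^ 2 * X 1 + C (a 0 k / (Nat.factorial k : ℝ)) * X 1 ^ k)).support,
      k + 1 ≤ m.sum fun _ e => e := by
  set u := udef1 k a with hu_def
  set v := vdef1 k a with hv_def
  set cf : ℕ → ℝ := cf1 k a with hcf
  -- basic degree bounds
  have hLBu : LB (k - 2) u := by
    rw [hu_def, udef1_eq, ← hcf]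
    have h0 : LB (0 + (k - 2)) (C (1 / 2 : ℝ) *
        ∑ i ∈ Finset.Ico 1 k, C (cf i) * X 0 ^ (i - 1) * X 1 ^ (k - i - 1)) := by
      refine LB_mul (LB_C _) (LB_sum fun i hi => ?_)
      rw [Finset.mem_Ico] at hi
      have h1 : LB (0 + (i - 1) + (k - i - 1)) (C (cf i) * X 0 ^ (i - 1) * X 1 ^ (k - i - 1)) :=
        LB_mul (LB_mul (LB_C _) (LB_X_pow 0 (i - 1))) (LB_X_pow 1 (k - i - 1))
      exact LB_mono (by omega) h1
    simpa using h0
  have hLBv : LB (k - 2) v := by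
    rw [hv_def, vdef1_eq, ← hcf]
    have h0 : LB (0 + (k - 2)) (C (cf k) * X 0 ^ (k - 2) : MvPolynomial (Fin 2) ℝ) :=
      LB_mul (LB_C _) (LB_X_pow 0 (k - 2))
    simpa using h0
  have hXu : LB 1 (X 0 - u : MvPolynomial (Fin 2) ℝ) :=
    LB_sub (LB_X 0) (LB_mono (by omega) hLBu)
  have hXv : LB 1 (X 1 - v : MvPolynomial (Fin 2) ℝ) :=
    LB_sub (LB_X 1) (LB_mono (by omega) hLBv)
  -- evaluate bind₁
  have hbind : bind₁ (fun j : Fin 2 => if j = 0 then X 0 - u else X 1 - v) (Pdef1 k a)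
      = (X 0 - u) ^ 2 * (X 1 - v)
        + ∑ i ∈ Finset.range (k + 1), C (cf i) * (X 0 - u) ^ i * (X 1 - v) ^ (k - i) := by
    rw [Pdef1_eq, map_add, map_mul, map_pow, map_sum, ← hcf]
    simp [bind₁_X_right]
  -- peel off the two boundary terms of the sum
  have hsplit : ∑ i ∈ Finset.range (k + 1), C (cf i) * (X 0 - u) ^ i * (X 1 - v) ^ (k - i)
      = C (cf 0) * (X 1 - v) ^ k
        + (∑ i ∈ Finset.Ico 1 k, C (cf i) * (X 0 - u) ^ i * (X 1 - v) ^ (k - i))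
        + C (cf k) * (X 0 - u) ^ k := by
    rw [Finset.sum_range_succ, Finset.sum_range_eq_add_Ico _ (by omega : 0 < k)]
    simp [Nat.sub_self]
  -- differences of powers
  have hD : ∀ i, LB (k - 3 + i) ((X 0 - u) ^ i - X 0 ^ i) := by
    intro i
    have h := LB_diff_pow (LB_X 0) hLBu (by omega : 1 ≤ k - 2) i
    have e : k - 2 - 1 = k - 3 := by omega
    rwa [e] at h
  have hE : ∀ j, LB (k - 3 + j) ((X 1 - v) ^ j - X 1 ^ j) := by
    intro j
    have h := LB_diff_pow (LB_X 1) hLBv (by omega : 1 ≤ k - 2) j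
    have e : k - 2 - 1 = k - 3 := by omega
    rwa [e] at h
  -- each substituted term is the original plus high-degree junk
  have hterm : ∀ i, i ≤ k → LB (k + 1)
      (C (cf i) * (X 0 - u) ^ i * (X 1 - v) ^ (k - i) - C (cf i) * X 0 ^ i * X 1 ^ (k - i)) := by
    intro i hi
    have key : C (cf i) * (X 0 - u) ^ i * (X 1 - v) ^ (k - i)
          - C (cf i) * X 0 ^ i * X 1 ^ (k - i)
        = C (cf i) * (((X 0 - u) ^ i - X 0 ^ i) * (X 1 - v) ^ (k - i))
          + C (cf i) * (X 0 ^ i * ((X 1 - v) ^ (k - i) - X 1 ^ (k - i))) := by ring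
    rw [key]
    have h1 : LB (0 + ((k - 3 + i) + 1 * (k - i)))
        (C (cf i) * (((X 0 - u) ^ i - X 0 ^ i) * (X 1 - v) ^ (k - i))) :=
      LB_mul (LB_C _) (LB_mul (hD i) (LB_pow hXv (k - i)))
    have h2 : LB (0 + (i + (k - 3 + (k - i))))
        (C (cf i) * (X 0 ^ i * ((X 1 - v) ^ (k - i) - X 1 ^ (k - i)))) :=
      LB_mul (LB_C _) (LB_mul (LB_X_pow 0 i) (hE (k - i)))
    exact LB_add (LB_mono (by omega) h1) (LB_mono (by omega) h2)
  -- the interior sum matches 2·x·y·u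
  have hsum_u : X 0 * X 1 * (2 * u)
      = ∑ i ∈ Finset.Ico 1 k, C (cf i) * X 0 ^ i * X 1 ^ (k - i) := by
    have h2 : (2 : MvPolynomial (Fin 2) ℝ) * C (1 / 2 : ℝ) = 1 := by
      rw [show (2 : MvPolynomial (Fin 2) ℝ) = C (2 : ℝ) from (map_ofNat C 2).symm, ← C_mul]
      norm_num
    calc X 0 * X 1 * (2 * u)
        = (2 * C (1 / 2 : ℝ)) * (X 0 * X 1 *
            ∑ i ∈ Finset.Ico 1 k, C (cf i) * X 0 ^ (i - 1) * X 1 ^ (k - i - 1)) := by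
          rw [hu_def, udef1_eq, ← hcf]; ring
      _ = X 0 * X 1 * ∑ i ∈ Finset.Ico 1 k, C (cf i) * X 0 ^ (i - 1) * X 1 ^ (k - i - 1) := by
          rw [h2, one_mul]
      _ = ∑ i ∈ Finset.Ico 1 k, C (cf i) * X 0 ^ i * X 1 ^ (k - i) := by
          rw [Finset.mul_sum]
          refine Finset.sum_congr rfl fun i hi => ?_
          rw [Finset.mem_Ico] at hi
          have e1 : (X 0 : MvPolynomial (Fin 2) ℝ) ^ i = X 0 ^ (i - 1) * X 0 := by
            rw [← pow_succ]; congr 1; omega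
          have e2 : (X 1 : MvPolynomial (Fin 2) ℝ) ^ (k - i) = X 1 ^ (k - i - 1) * X 1 := by
            rw [← pow_succ]; congr 1; omega
          rw [e1, e2]; ring
  -- x² v = c_k x^k
  have hxv : (X 0 : MvPolynomial (Fin 2) ℝ) ^ 2 * v = C (cf k) * X 0 ^ k := by
    rw [hv_def, vdef1_eq, ← hcf]
    have e : (X 0 : MvPolynomial (Fin 2) ℝ) ^ 2 * X 0 ^ (k - 2) = X 0 ^ k := by
      rw [← pow_add]; congr 1; omega
    calc (X 0 : MvPolynomial (Fin 2) ℝ) ^ 2 * (C (cf k) * X 0 ^ (k - 2))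
        = C (cf k) * (X 0 ^ 2 * X 0 ^ (k - 2)) := by ring
      _ = C (cf k) * X 0 ^ k := by rw [e]
  -- main decomposition of the error term
  have hmain : bind₁ (fun j : Fin 2 => if j = 0 then X 0 - u else X 1 - v) (Pdef1 k a)
        - (X 0 ^ 2 * X 1 + C (a 0 k / (Nat.factorial k : ℝ)) * X 1 ^ k)
      = (2 * X 0 * u * v + u ^ 2 * X 1 - u ^ 2 * v)
        + (C (cf 0) * ((X 1 - v) ^ k - X 1 ^ k)
            + C (cf k) * ((X 0 - u) ^ k - X 0 ^ k))
        + ∑ i ∈ Finset.Ico 1 k,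
            (C (cf i) * (X 0 - u) ^ i * (X 1 - v) ^ (k - i)
              - C (cf i) * X 0 ^ i * X 1 ^ (k - i)) := by
    have hc0 : C (a 0 k / (Nat.factorial k : ℝ)) = (C (cf 0) : MvPolynomial (Fin 2) ℝ) := by
      rw [hcf, cf1_zero]
    rw [hbind, hsplit, Finset.sum_sub_distrib, ← hsum_u, hc0]
    have expand : (C (cf 0) : MvPolynomial (Fin 2) ℝ) * (X 1 - v) ^ k
        = C (cf 0) * ((X 1 - v) ^ k - X 1 ^ k) + C (cf 0) * X 1 ^ k := by ring
    have expand2 : (C (cf k) : MvPolynomial (Fin 2) ℝ) * (X 0 - u) ^ k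
        = C (cf k) * ((X 0 - u) ^ k - X 0 ^ k) + C (cf k) * X 0 ^ k := by ring
    rw [expand, expand2, ← hxv]
    ring
  rw [hmain]
  intro m hm
  refine LB_add (LB_add ?_ ?_) ?_ m hm
  · have h1 : LB (1 + (k - 2) + (k - 2))
        ((2 : MvPolynomial (Fin 2) ℝ) * X 0 * u * v) := by
      have h0 : LB ((0 + 1 + (k - 2)) + (k - 2)) ((2 : MvPolynomial (Fin 2) ℝ) * X 0 * u * v) :=
        LB_mul (LB_mul (LB_mul (fun _ _ => Nat.zero_le _) (LB_X 0)) hLBu) hLBv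
      simpa using h0
    have h2 : LB ((k - 2) * 2 + 1) (u ^ 2 * X 1) := LB_mul (LB_pow hLBu 2) (LB_X 1)
    have h3 : LB ((k - 2) * 2 + (k - 2)) (u ^ 2 * v) := LB_mul (LB_pow hLBu 2) hLBv
    exact LB_sub (LB_add (LB_mono (by omega) h1) (LB_mono (by omega) h2))
      (LB_mono (by omega) h3)
  · have h1 : LB (0 + (k - 3 + k)) (C (cf 0) * ((X 1 - v) ^ k - X 1 ^ k)) :=
      LB_mul (LB_C _) (hE k)
    have h2 : LB (0 + (k - 3 + k)) (C (cf k) * ((X 0 - u) ^ k - X 0 ^ k)) :=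
      LB_mul (LB_C _) (hD k)
    exact LB_add (LB_mono (by omega) h1) (LB_mono (by omega) h2)
  · exact LB_sum fun i hi => hterm i (by rw [Finset.mem_Ico] at hi; omega)
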